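/- Suppose either (d = 1 or d = 2) and κ > 0, or d ≥ 3 and 0 < κ < κ_c. Then there exists m > 0 such that (1/(4κ)) ∫_{[0,1)^d} cos(2π k_1) / ( m + 2 Σ_{j=1}^d (1 − cos(2π k_j)) ) dk = m/(2d) + 1 − 1/(8κd), where k_1 denotes the first coordinate of k. -/

import Mathlib

noncomputable section
open MeasureTheory

/-- The critical inverse temperature
`κ_c = (1/4) ∫_{(0,1)^d} dk / (2 Σ_j (1 − cos(2π k_j)))` (finite for `d ≥ 3`). -/
def kcrit (d : ℕ) : ℝ :=
  (1 / 4) * ∫ k in Set.univ.pi fun _ : Fin d => Set.Ioo (0 : ℝ) 1,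
    (2 * ∑ j : Fin d, (1 - Real.cos (2 * Real.pi * k j)))⁻¹

open Real Set

abbrev Cube (d : ℕ) : Set (Fin d → ℝ) := Set.univ.pi fun _ : Fin d => Set.Ico (0 : ℝ) 1

def En (d : ℕ) (k : Fin d → ℝ) : ℝ := 2 * ∑ j : Fin d, (1 - Real.cos (2 * Real.pi * k j))

lemma En_nonneg (d : ℕ) (k : Fin d → ℝ) : 0 ≤ En d k := by
  have h : (0:ℝ) ≤ ∑ j : Fin d, (1 - Real.cos (2 * Real.pi * k j)) :=
    Finset.sum_nonneg fun j _ => by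
      have := Real.cos_le_one (2 * Real.pi * k j); linarith
  unfold En; linarith

lemma En_cont (d : ℕ) : Continuous (En d) := by
  unfold En; fun_prop

lemma volume_cube (d : ℕ) : volume (Cube d) = 1 := by
  rw [volume_pi_pi]
  simp [Real.volume_Ico]

-- integrability of basic integrands
lemma integrableOn_aux (d : ℕ) (m : ℝ) (hm : 0 < m) (g : (Fin d → ℝ) → ℝ)
    (hg : Continuous g) (hgb : ∀ k, |g k| ≤ 2) :
    IntegrableOn (fun k => g k / (m + En d k)) (Cube d) := by
  have hb : ∀ k, ‖g k / (m + En d k)‖ ≤ 2 / m := by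
    intro k
    have h1 : 0 < m + En d k := by have := En_nonneg d k; linarith
    rw [Real.norm_eq_abs, abs_div, abs_of_pos h1]
    gcongr
    · exact hgb k
    · exact le_add_of_nonneg_right (En_nonneg d k)
  have hcont : Continuous fun k => g k / (m + En d k) := by
    apply hg.div (continuous_const.add (En_cont d))
    intro k; have := En_nonneg d k; exact ne_of_gt (show 0 < m + En d k by linarith)
  have hfin : volume (Cube d) < ⊤ := by rw [volume_cube]; exact ENNReal.one_lt_top
  exact Integrable.mono' (integrableOn_const hfin.ne)
    hcont.aestronglyMeasurable.restrict (Filter.Eventually.of_forall hb)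
example (d : ℕ) (e : Fin d ≃ Fin d) (g : Fin d → ℝ) :
    (MeasurableEquiv.piCongrLeft (fun _ : Fin d => ℝ) e).symm g = fun a => g (e a) := rfl

lemma En_comp (d : ℕ) (e : Fin d ≃ Fin d) (k : Fin d → ℝ) : En d (fun a => k (e a)) = En d k := by
  unfold En
  congr 1
  exact Fintype.sum_equiv e _ _ (fun j => rfl)

lemma cube_comp (d : ℕ) (e : Fin d ≃ Fin d) (k : Fin d → ℝ) :
    ((fun a => k (e a)) ∈ Cube d) ↔ k ∈ Cube d := by
  simp only [Cube, Set.mem_pi, Set.mem_univ, forall_true_left]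
  exact ⟨fun h j => by simpa using h (e.symm j), fun h a => h (e a)⟩

lemma sym_integral (d : ℕ) (m : ℝ) (i i' : Fin d) :
    ∫ k in Cube d, (1 - Real.cos (2 * Real.pi * k i)) / (m + En d k)
      = ∫ k in Cube d, (1 - Real.cos (2 * Real.pi * k i')) / (m + En d k) := by
  classical
  set e : Fin d ≃ Fin d := Equiv.swap i i'
  set T := (MeasurableEquiv.piCongrLeft (fun _ : Fin d => ℝ) e).symm
  have hT : MeasurePreserving T volume volume :=
    (MeasureTheory.volume_measurePreserving_piCongrLeft (fun _ : Fin d => ℝ) e).symm _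
  have hemb : MeasurableEmbedding T := T.measurableEmbedding
  have := hT.setIntegral_preimage_emb hemb
    (fun k => (1 - Real.cos (2 * Real.pi * k i)) / (m + En d k)) (Cube d)
  rw [← this]
  have hpre : T ⁻¹' Cube d = Cube d := by
    ext k
    simp only [Set.mem_preimage]
    exact cube_comp d e k
  rw [hpre]
  apply setIntegral_congr_fun (MeasurableSet.univ_pi fun _ => measurableSet_Ico)
  intro k _
  show (1 - Real.cos (2 * Real.pi * (T k) i)) / (m + En d (T k)) = _
  have h1 : T k = fun a => k (e a) := rfl
  rw [h1, En_comp]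
  have h2 : e i = i' := Equiv.swap_apply_left i i'
  simp only [h2]

def Iv (d : ℕ) (m : ℝ) : ℝ := ∫ k in Cube d, (m + En d k)⁻¹

lemma intOn_inv (d : ℕ) {m : ℝ} (hm : 0 < m) :
    IntegrableOn (fun k => (m + En d k)⁻¹) (Cube d) := by
  have := integrableOn_aux d m hm (fun _ => 1) continuous_const (fun k => by norm_num)
  simpa [one_div] using this

lemma intOn_cos (d : ℕ) {m : ℝ} (hm : 0 < m) (i : Fin d) :
    IntegrableOn (fun k => Real.cos (2 * Real.pi * k i) / (m + En d k)) (Cube d) :=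
  integrableOn_aux d m hm _ (by fun_prop) (fun k => by
    have := abs_cos_le_one (2 * Real.pi * k i); linarith)

lemma intOn_onesubcos (d : ℕ) {m : ℝ} (hm : 0 < m) (i : Fin d) :
    IntegrableOn (fun k => (1 - Real.cos (2 * Real.pi * k i)) / (m + En d k)) (Cube d) :=
  integrableOn_aux d m hm _ (by fun_prop) (fun k => by
    have h1 := abs_cos_le_one (2 * Real.pi * k i)
    rw [abs_le] at h1 ⊢; constructor <;> linarith [h1.1, h1.2])

lemma key_identity (d : ℕ) (hd : 1 ≤ d) {m : ℝ} (hm : 0 < m) :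
    ∫ k in Cube d, Real.cos (2 * Real.pi * k ⟨0, hd⟩) / (m + En d k)
      = (1 + m / (2 * d)) * Iv d m - 1 / (2 * d) := by
  set i : Fin d := ⟨0, hd⟩
  have hpos : ∀ k : Fin d → ℝ, 0 < m + En d k := fun k => by
    have := En_nonneg d k; linarith
  -- step 1: J = Iv - S
  have step1 : ∫ k in Cube d, Real.cos (2 * Real.pi * k i) / (m + En d k)
      = Iv d m - ∫ k in Cube d, (1 - Real.cos (2 * Real.pi * k i)) / (m + En d k) := by
    rw [Iv, ← integral_sub (intOn_inv d hm) (intOn_onesubcos d hm i)]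
    apply setIntegral_congr_fun (MeasurableSet.univ_pi fun _ => measurableSet_Ico)
    intro k _
    have := (hpos k).ne'
    field_simp
    ring
  -- step 2: d * S = 1/2 - (m/2) * Iv
  have step2 : (d : ℝ) * ∫ k in Cube d, (1 - Real.cos (2 * Real.pi * k i)) / (m + En d k)
      = 1 / 2 - (m / 2) * Iv d m := by
    have hsum : (d : ℝ) * ∫ k in Cube d, (1 - Real.cos (2 * Real.pi * k i)) / (m + En d k)
        = ∑ j : Fin d, ∫ k in Cube d, (1 - Real.cos (2 * Real.pi * k j)) / (m + En d k) := by
      rw [Finset.sum_congr rfl (fun j _ => sym_integral d m j i)]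
      simp [Finset.sum_const, Finset.card_univ]
    rw [hsum, ← integral_finset_sum _ (fun j _ => intOn_onesubcos d hm j)]
    have heq : ∀ k ∈ Cube d, (∑ j : Fin d, (1 - Real.cos (2 * Real.pi * k j)) / (m + En d k))
        = 1 / 2 - (m / 2) * (m + En d k)⁻¹ := by
      intro k _
      rw [← Finset.sum_div]
      have h2 : ∑ j : Fin d, (1 - Real.cos (2 * Real.pi * k j)) = En d k / 2 := by
        unfold En; ring
      rw [h2]
      have := (hpos k).ne'
      field_simp
      ring
    rw [setIntegral_congr_fun (MeasurableSet.univ_pi fun _ => measurableSet_Ico) heq]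
    rw [integral_sub (integrableOn_const (C := (1/2 : ℝ)) (μ := volume) (s := Cube d) (by rw [volume_cube]; exact ENNReal.one_ne_top))
      ((intOn_inv d hm).const_mul (m/2))]
    rw [MeasureTheory.integral_const_mul, setIntegral_const, measureReal_def, volume_cube]
    simp [Iv]
  -- combine
  have hd0 : (0:ℝ) < (d:ℝ) := by exact_mod_cast hd
  rw [step1]
  have hS : ∫ k in Cube d, (1 - Real.cos (2 * Real.pi * k i)) / (m + En d k)
      = (1 / 2 - (m / 2) * Iv d m) / d := by
    field_simp at step2 ⊢
    linarith [step2]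
  rw [hS]
  field_simp
  ring

lemma En_le (d : ℕ) (k : Fin d → ℝ) : En d k ≤ 64 * ∑ j : Fin d, (k j)^2 := by
  have h : ∀ j : Fin d, 1 - Real.cos (2 * Real.pi * k j) ≤ 32 * (k j)^2 := by
    intro j
    have h1 := Real.one_sub_sq_div_two_le_cos (x := 2 * Real.pi * k j)
    have hpi : Real.pi ≤ 4 := Real.pi_le_four
    have hpi0 : 0 < Real.pi := Real.pi_pos
    have hpisq : Real.pi^2 ≤ 16 := by nlinarith
    nlinarith [mul_nonneg (sub_nonneg.2 hpisq) (sq_nonneg (k j))]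
  calc En d k ≤ 2 * ∑ j : Fin d, 32 * (k j)^2 := by
        unfold En
        have := Finset.sum_le_sum (fun j (_ : j ∈ Finset.univ) => h j)
        linarith
    _ = 64 * ∑ j : Fin d, (k j)^2 := by rw [Finset.mul_sum, Finset.mul_sum]; congr 1; ext j; ring

lemma interval_comp (a : ℝ) (ha : 0 < a) (hab : a ≤ 1) :
    ∫ x in Set.Ico a (1:ℝ), (65 * x^2)⁻¹ = (1/65) * (a⁻¹ - 1) := by
  rw [MeasureTheory.integral_Ico_eq_integral_Ioo, ← MeasureTheory.integral_Ioc_eq_integral_Ioo,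
    ← intervalIntegral.integral_of_le hab]
  have : ∀ x ∈ Set.uIcc a (1:ℝ), (65 * x^2)⁻¹ = 65⁻¹ * x ^ (-2 : ℤ) := by
    intro x hx
    rw [mul_inv, zpow_neg, zpow_two]
    norm_num [sq]
  rw [intervalIntegral.integral_congr this, intervalIntegral.integral_const_mul,
    integral_zpow (Or.inr ⟨by norm_num, Set.notMem_uIcc_of_lt ha one_pos⟩)]
  norm_num; ring

lemma cube_measurable (d : ℕ) : MeasurableSet (Cube d) :=
  MeasurableSet.univ_pi fun _ => measurableSet_Ico

lemma Iv_lb_one {m : ℝ} (hm : 0 < m) (hm1 : m ≤ 1) :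
    (1/65) * ((Real.sqrt m)⁻¹ - 1) ≤ Iv 1 m := by
  set a := Real.sqrt m with ha_def
  have ha : 0 < a := Real.sqrt_pos.2 hm
  have ha1 : a ≤ 1 := by
    rw [ha_def, show (1:ℝ) = Real.sqrt 1 by simp]
    exact Real.sqrt_le_sqrt hm1
  have ham : m ≤ a^2 := by rw [Real.sq_sqrt hm.le]
  set A : Set (Fin 1 → ℝ) := Cube 1 ∩ {k | a ≤ k 0} with hA
  have hAmeas : MeasurableSet A :=
    (cube_measurable 1).inter (measurableSet_le measurable_const (measurable_pi_apply 0))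
  have hAfin : volume A < ⊤ :=
    lt_of_le_of_lt (measure_mono Set.inter_subset_left) (by rw [volume_cube]; exact ENNReal.one_lt_top)
  -- pointwise bound on A
  have hpt : ∀ k ∈ A, (65 * (k 0)^2)⁻¹ ≤ (m + En 1 k)⁻¹ := by
    intro k hk
    rcases hk with ⟨hkc, hka⟩
    have hk0 : a ≤ k 0 := hka
    have hk01 : k 0 < 1 := (hkc 0 (Set.mem_univ 0)).2
    have hk00 : 0 < k 0 := lt_of_lt_of_le ha hk0
    have hE : En 1 k ≤ 64 * (k 0)^2 := by
      have := En_le 1 k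
      simpa [Fin.sum_univ_one] using this
    have hm' : m ≤ (k 0)^2 := le_trans ham (by nlinarith)
    exact inv_anti₀ (by have := En_nonneg 1 k; linarith) (by nlinarith)
  -- integrability of lower function on A
  have hint2 : IntegrableOn (fun k : Fin 1 → ℝ => (65 * (k 0)^2)⁻¹) A := by
    have hmeas : Measurable fun k : Fin 1 → ℝ => ((65:ℝ) * (k 0)^2)⁻¹ :=
      (measurable_const.mul ((measurable_pi_apply 0).pow_const 2)).inv
    apply Integrable.mono' (g := fun _ => (65 * a^2)⁻¹)
      (integrableOn_const hAfin.ne) hmeas.aestronglyMeasurable.restrict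
    refine (ae_restrict_iff' hAmeas).2 (Filter.Eventually.of_forall fun k hk => ?_)
    have hk0 : a ≤ k 0 := hk.2
    have hk00 : (0:ℝ) < 65 * (k 0)^2 := by nlinarith
    rw [Real.norm_eq_abs, abs_of_pos (inv_pos.2 hk00)]
    exact inv_anti₀ (by positivity) (by nlinarith)
  have step1 : ∫ k in A, (65 * (k 0)^2)⁻¹ ≤ ∫ k in A, (m + En 1 k)⁻¹ :=
    setIntegral_mono_on hint2 ((intOn_inv 1 hm).mono_set Set.inter_subset_left) hAmeas hpt
  have step2 : ∫ k in A, (m + En 1 k)⁻¹ ≤ Iv 1 m := by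
    apply setIntegral_mono_set (intOn_inv 1 hm)
    · refine Filter.Eventually.of_forall fun k => ?_
      have := En_nonneg 1 k; positivity
    · exact HasSubset.Subset.eventuallyLE Set.inter_subset_left
  -- change of variables to ℝ
  have step3 : ∫ k in A, ((65:ℝ) * (k 0)^2)⁻¹ = ∫ x in Set.Ico a (1:ℝ), (65 * x^2)⁻¹ := by
    set T := (MeasurableEquiv.funUnique (Fin 1) ℝ).symm with hT
    have hTmp : MeasurePreserving T volume volume :=
      (MeasureTheory.volume_preserving_funUnique (Fin 1) ℝ).symm _
    have := hTmp.setIntegral_preimage_emb (MeasurableEquiv.measurableEmbedding T)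
      (fun k : Fin 1 → ℝ => ((65:ℝ) * (k 0)^2)⁻¹) A
    rw [← this]
    have hpre : T ⁻¹' A = Set.Ico a 1 := by
      ext x
      simp only [Set.mem_preimage, hA, Set.mem_inter_iff, Set.mem_setOf_eq, Set.mem_Ico]
      constructor
      · rintro ⟨hc, hax⟩
        exact ⟨hax, (hc 0 (Set.mem_univ 0)).2⟩
      · rintro ⟨hax, hx1⟩
        exact ⟨fun j _ => ⟨le_trans ha.le hax, hx1⟩, hax⟩
    rw [hpre]
    exact setIntegral_congr_fun measurableSet_Ico fun x _ => rfl
  calc (1/65) * (a⁻¹ - 1) = ∫ x in Set.Ico a (1:ℝ), (65 * x^2)⁻¹ := (interval_comp a ha ha1).symm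
    _ = ∫ k in A, ((65:ℝ) * (k 0)^2)⁻¹ := step3.symm
    _ ≤ ∫ k in A, (m + En 1 k)⁻¹ := step1
    _ ≤ Iv 1 m := step2

section dtwo
variable {m : ℝ}

lemma inner_slice (a : ℝ) (ha : 0 < a)
    (x : ℝ) :
    ∫ y : ℝ, ({p : ℝ × ℝ | a ≤ p.1 ∧ p.1 < 1 ∧ 0 ≤ p.2 ∧ p.2 ≤ p.1}.indicator
        (fun p => (129 * p.1^2)⁻¹) (x, y))
      = (Set.Ico a 1).indicator (fun x => x * (129 * x^2)⁻¹) x := by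
  by_cases hx : x ∈ Set.Ico a 1
  · have h1 : (fun y : ℝ => ({p : ℝ × ℝ | a ≤ p.1 ∧ p.1 < 1 ∧ 0 ≤ p.2 ∧ p.2 ≤ p.1}.indicator
        (fun p => (129 * p.1^2)⁻¹) (x, y)))
        = (Set.Icc 0 x).indicator (fun _ => (129 * x^2)⁻¹) := by
      funext y
      simp only [Set.indicator, Set.mem_setOf_eq, Set.mem_Icc]
      rcases hx with ⟨hax, hx1⟩
      by_cases hy : 0 ≤ y ∧ y ≤ x
      · rw [if_pos ⟨hax, hx1, hy.1, hy.2⟩, if_pos hy]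
      · rw [if_neg (fun hc => hy ⟨hc.2.2.1, hc.2.2.2⟩), if_neg hy]
    rw [h1, Set.indicator_of_mem hx]
    rw [integral_indicator_const _ measurableSet_Icc]
    have hx0 : (0:ℝ) ≤ x := le_trans ha.le hx.1
    simp [Real.volume_Icc, ENNReal.toReal_ofReal hx0, hx0]
  · have h1 : (fun y : ℝ => ({p : ℝ × ℝ | a ≤ p.1 ∧ p.1 < 1 ∧ 0 ≤ p.2 ∧ p.2 ≤ p.1}.indicator
        (fun p => (129 * p.1^2)⁻¹) (x, y))) = fun _ => 0 := by
      funext y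
      rw [Set.indicator_of_notMem]
      intro hc
      exact hx ⟨hc.1, hc.2.1⟩
    rw [h1, Set.indicator_of_notMem hx, integral_zero]

lemma Iv_lb_two (hm : 0 < m) (hm1 : m ≤ 1) :
    (1/129) * (-Real.log (Real.sqrt m)) ≤ Iv 2 m := by
  set a := Real.sqrt m with ha_def
  have ha : 0 < a := Real.sqrt_pos.2 hm
  have ha1 : a ≤ 1 := by
    rw [ha_def, show (1:ℝ) = Real.sqrt 1 by simp]
    exact Real.sqrt_le_sqrt hm1
  have ham : m ≤ a^2 := by rw [Real.sq_sqrt hm.le]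
  set S : Set (ℝ × ℝ) := {p : ℝ × ℝ | a ≤ p.1 ∧ p.1 < 1 ∧ 0 ≤ p.2 ∧ p.2 ≤ p.1} with hS_def
  have hSmeas : MeasurableSet S := by
    apply MeasurableSet.inter (measurableSet_le measurable_const measurable_fst)
    apply MeasurableSet.inter (measurableSet_lt measurable_fst measurable_const)
    exact (measurableSet_le measurable_const measurable_snd).inter
      (measurableSet_le measurable_snd measurable_fst)
  have hSsub : S ⊆ (Set.Icc a 1) ×ˢ (Set.Icc 0 1) := by
    rintro ⟨x, y⟩ ⟨h1, h2, h3, h4⟩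
    exact ⟨⟨h1, h2.le⟩, ⟨h3, le_trans h4 h2.le⟩⟩
  have hSfin : volume S < ⊤ := by
    apply lt_of_le_of_lt (measure_mono hSsub)
    rw [Measure.volume_eq_prod, Measure.prod_prod]
    exact ENNReal.mul_lt_top (by simp [Real.volume_Icc]) (by simp [Real.volume_Icc])
  set A : Set (Fin 2 → ℝ) := Cube 2 ∩ {k | a ≤ k 0 ∧ k 1 ≤ k 0} with hA_def
  have hAmeas : MeasurableSet A :=
    (cube_measurable 2).inter ((measurableSet_le measurable_const (measurable_pi_apply 0)).inter
      (measurableSet_le (measurable_pi_apply 1) (measurable_pi_apply 0)))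
  have hAfin : volume A < ⊤ :=
    lt_of_le_of_lt (measure_mono Set.inter_subset_left) (by rw [volume_cube]; exact ENNReal.one_lt_top)
  -- pointwise bound on A
  have hpt : ∀ k ∈ A, ((129:ℝ) * (k 0)^2)⁻¹ ≤ (m + En 2 k)⁻¹ := by
    intro k hk
    obtain ⟨hkc, hka, hk10⟩ := hk
    have h0 : (0:ℝ) ≤ k 1 := (hkc 1 (Set.mem_univ 1)).1
    have hk00 : 0 < k 0 := lt_of_lt_of_le ha hka
    have hE : En 2 k ≤ 64 * ((k 0)^2 + (k 1)^2) := by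
      have := En_le 2 k
      simpa [Fin.sum_univ_two] using this
    have hm' : m ≤ (k 0)^2 := le_trans ham (by nlinarith)
    exact inv_anti₀ (by have := En_nonneg 2 k; linarith) (by nlinarith)
  -- integrability
  have hmeasg : Measurable fun k : Fin 2 → ℝ => ((129:ℝ) * (k 0)^2)⁻¹ :=
    (measurable_const.mul ((measurable_pi_apply 0).pow_const 2)).inv
  have hint2 : IntegrableOn (fun k : Fin 2 → ℝ => ((129:ℝ) * (k 0)^2)⁻¹) A := by
    apply Integrable.mono' (g := fun _ => (129 * a^2)⁻¹)
      (integrableOn_const hAfin.ne) hmeasg.aestronglyMeasurable.restrict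
    refine (ae_restrict_iff' hAmeas).2 (Filter.Eventually.of_forall fun k hk => ?_)
    have hk0 : a ≤ k 0 := hk.2.1
    have hk00 : (0:ℝ) < 129 * (k 0)^2 := by nlinarith
    rw [Real.norm_eq_abs, abs_of_pos (inv_pos.2 hk00)]
    exact inv_anti₀ (by positivity) (by nlinarith)
  have step1 : ∫ k in A, ((129:ℝ) * (k 0)^2)⁻¹ ≤ ∫ k in A, (m + En 2 k)⁻¹ :=
    setIntegral_mono_on hint2 ((intOn_inv 2 hm).mono_set Set.inter_subset_left) hAmeas hpt
  have step2 : ∫ k in A, (m + En 2 k)⁻¹ ≤ Iv 2 m := by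
    apply setIntegral_mono_set (intOn_inv 2 hm)
    · refine Filter.Eventually.of_forall fun k => ?_
      have := En_nonneg 2 k; positivity
    · exact HasSubset.Subset.eventuallyLE Set.inter_subset_left
  -- change of variables to ℝ × ℝ
  have step3 : ∫ k in A, ((129:ℝ) * (k 0)^2)⁻¹ = ∫ p in S, ((129:ℝ) * p.1^2)⁻¹ := by
    set T := (MeasurableEquiv.finTwoArrow (α := ℝ)).symm with hT
    have hTmp : MeasurePreserving T volume volume :=
      (MeasureTheory.volume_preserving_finTwoArrow ℝ).symm _
    have := hTmp.setIntegral_preimage_emb (MeasurableEquiv.measurableEmbedding T)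
      (fun k : Fin 2 → ℝ => ((129:ℝ) * (k 0)^2)⁻¹) A
    rw [← this]
    have hpre : ⇑T ⁻¹' A = S := by
      ext ⟨x, y⟩
      simp only [Set.mem_preimage, hA_def, Set.mem_inter_iff, Set.mem_setOf_eq, hS_def]
      have hTx : T (x, y) 0 = x := rfl
      have hTy : T (x, y) 1 = y := rfl
      constructor
      · rintro ⟨hc, h1, h2⟩
        rw [hTx] at h1; rw [hTx, hTy] at h2
        have c0 := hc 0 (Set.mem_univ 0); have c1 := hc 1 (Set.mem_univ 1)
        rw [hTx] at c0; rw [hTy] at c1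
        exact ⟨h1, c0.2, c1.1, h2⟩
      · rintro ⟨h1, h2, h3, h4⟩
        refine ⟨fun j _ => ?_, by rw [hTx]; exact h1, by rw [hTx, hTy]; exact h4⟩
        fin_cases j
        · exact ⟨le_trans ha.le h1, h2⟩
        · exact ⟨h3, lt_of_le_of_lt h4 h2⟩
    rw [hpre]
    exact setIntegral_congr_fun hSmeas fun p _ => rfl
  -- Tonelli
  have hintS : Integrable (S.indicator fun p : ℝ × ℝ => ((129:ℝ) * p.1^2)⁻¹) := by
    rw [integrable_indicator_iff hSmeas]
    apply Integrable.mono' (g := fun _ => (129 * a^2)⁻¹)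
      (integrableOn_const hSfin.ne)
      ((measurable_const.mul (measurable_fst.pow_const 2)).inv).aestronglyMeasurable.restrict
    refine (ae_restrict_iff' hSmeas).2 (Filter.Eventually.of_forall fun p hp => ?_)
    have hp1 : a ≤ p.1 := hp.1
    have hp00 : (0:ℝ) < 129 * p.1^2 := by nlinarith
    show ‖((129:ℝ) * p.1^2)⁻¹‖ ≤ (129 * a^2)⁻¹
    rw [Real.norm_eq_abs, abs_of_pos (inv_pos.2 hp00)]
    exact inv_anti₀ (by positivity) (by nlinarith)
  have step4 : ∫ p in S, ((129:ℝ) * p.1^2)⁻¹ = ∫ x in Set.Ico a 1, x * (129 * x^2)⁻¹ := by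
    rw [← integral_indicator hSmeas]
    rw [Measure.volume_eq_prod] at hintS ⊢
    rw [integral_prod _ hintS]
    rw [← integral_indicator measurableSet_Ico]
    congr 1
    funext x
    exact inner_slice a ha x
  have step5 : ∫ x in Set.Ico a 1, x * (129 * x^2)⁻¹ = (1/129) * (-Real.log a) := by
    rw [MeasureTheory.integral_Ico_eq_integral_Ioo, ← MeasureTheory.integral_Ioc_eq_integral_Ioo,
      ← intervalIntegral.integral_of_le ha1]
    have : ∀ x ∈ Set.uIcc a (1:ℝ), x * (129 * x^2)⁻¹ = (129:ℝ)⁻¹ * x⁻¹ := by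
      intro x hx
      rw [Set.uIcc_of_le ha1] at hx
      have hx0 : 0 < x := lt_of_lt_of_le ha hx.1
      field_simp
    rw [intervalIntegral.integral_congr this, intervalIntegral.integral_const_mul,
      integral_inv_of_pos ha one_pos]
    rw [Real.log_div one_ne_zero ha.ne']
    norm_num
  calc (1/129) * (-Real.log a) = ∫ x in Set.Ico a 1, x * (129 * x^2)⁻¹ := step5.symm
    _ = ∫ p in S, ((129:ℝ) * p.1^2)⁻¹ := step4.symm
    _ = ∫ k in A, ((129:ℝ) * (k 0)^2)⁻¹ := step3.symm
    _ ≤ ∫ k in A, (m + En 2 k)⁻¹ := step1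
    _ ≤ Iv 2 m := step2
end dtwo

lemma Iv_le (d : ℕ) {m : ℝ} (hm : 0 < m) : Iv d m ≤ m⁻¹ := by
  have h1 : Iv d m ≤ ∫ _ in Cube d, m⁻¹ :=
    setIntegral_mono_on (intOn_inv d hm)
      (integrableOn_const (by rw [volume_cube]; exact ENNReal.one_ne_top))
      (cube_measurable d)
      (fun k _ => inv_anti₀ hm (le_add_of_nonneg_right (En_nonneg d k)))
  calc Iv d m ≤ _ := h1
    _ = m⁻¹ := by rw [setIntegral_const, measureReal_def, volume_cube]; simp

lemma Iv_continuousAt (d : ℕ) {m₀ : ℝ} (hm₀ : 0 < m₀) : ContinuousAt (Iv d) m₀ := by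
  apply MeasureTheory.continuousAt_of_dominated (bound := fun _ => (m₀/2)⁻¹)
  · exact Filter.Eventually.of_forall fun m =>
      ((measurable_const.add (En_cont d).measurable).inv).aestronglyMeasurable.restrict
  · have hev : ∀ᶠ m in nhds m₀, m₀/2 < m := eventually_gt_nhds (by linarith)
    refine hev.mono fun m hm => Filter.Eventually.of_forall fun k => ?_
    have hE := En_nonneg d k
    have h1 : (0:ℝ) < m + En d k := by linarith
    rw [Real.norm_eq_abs, abs_of_pos (inv_pos.2 h1)]
    exact inv_anti₀ (by linarith) (by linarith)
  · exact integrableOn_const (by rw [volume_cube]; exact ENNReal.one_ne_top)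
  · refine Filter.Eventually.of_forall fun k => ?_
    have : m₀ + En d k ≠ 0 := by have := En_nonneg d k; positivity
    exact ((continuousAt_id.add continuousAt_const)).inv₀ this

lemma restrict_Ioo_eq (d : ℕ) :
    volume.restrict (Set.univ.pi fun _ : Fin d => Set.Ioo (0 : ℝ) 1)
      = volume.restrict (Cube d) := by
  apply Measure.restrict_congr_set
  have h1 : (Set.univ.pi fun _ : Fin d => Set.Ioo (0 : ℝ) 1)
      =ᵐ[volume] (Set.univ.pi fun _ : Fin d => Set.Icc (0 : ℝ) 1) := by
    rw [volume_pi]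
    exact MeasureTheory.Measure.pi_Ioo_ae_eq_pi_Icc
  have h2 : (Cube d : Set (Fin d → ℝ))
      =ᵐ[volume] (Set.univ.pi fun _ : Fin d => Set.Icc (0 : ℝ) 1) := by
    rw [volume_pi]
    exact MeasureTheory.Measure.pi_Ico_ae_eq_pi_Icc
  exact h1.trans h2.symm

lemma En_pos_ae (d : ℕ) (hd : 1 ≤ d) : ∀ᵐ k ∂(volume.restrict (Cube d)), 0 < En d k := by
  rw [ae_restrict_iff' (cube_measurable d)]
  have hnull : volume ({k : Fin d → ℝ | ¬ (k ∈ Cube d → 0 < En d k)}) = 0 := by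
    apply measure_mono_null (t := {(fun _ => 0 : Fin d → ℝ)})
    · intro k hk
      simp only [Set.mem_setOf_eq, _root_.not_imp] at hk
      obtain ⟨hkc, hnpos⟩ := hk
      have hE0 : En d k = 0 := le_antisymm (not_lt.1 hnpos) (En_nonneg d k)
      have hsum : ∑ j : Fin d, (1 - Real.cos (2 * Real.pi * k j)) = 0 := by
        unfold En at hE0; linarith
      have hterm : ∀ j : Fin d, 1 - Real.cos (2 * Real.pi * k j) = 0 := by
        have := (Finset.sum_eq_zero_iff_of_nonneg (fun j _ => by
          have := Real.cos_le_one (2 * Real.pi * k j); linarith)).1 hsum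
        exact fun j => this j (Finset.mem_univ j)
      have hk0 : ∀ j, k j = 0 := by
        intro j
        have hj := hkc j (Set.mem_univ j)
        have hcos : Real.cos (2 * Real.pi * k j) = 1 := by have := hterm j; linarith
        rcases (Real.cos_eq_one_iff_of_lt_of_lt
          (by nlinarith [Real.pi_pos, hj.1, hj.2]) (by nlinarith [Real.pi_pos, hj.1, hj.2])).1 hcos with h
        have h2 : (2 * Real.pi) ≠ 0 := by positivity
        exact (mul_eq_zero.1 h).resolve_left h2
      simp only [Set.mem_singleton_iff]
      funext j; exact hk0 j
    · haveI : Nonempty (Fin d) := ⟨⟨0, hd⟩⟩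
      rw [volume_pi]
      exact measure_singleton _
  filter_upwards [measure_eq_zero_iff_ae_notMem.1 hnull] with k hk
  simpa using not_not.1 hk

lemma exists_big_of_three (d : ℕ) (hd : 1 ≤ d) (κ : ℝ) (h0 : 0 < κ) (hκ : κ < kcrit d) :
    ∃ m : ℝ, 0 < m ∧ 4 * κ < Iv d m := by
  by_cases hInt : IntegrableOn (fun k => (En d k)⁻¹) (Cube d) volume
  case neg =>
    exfalso
    have : kcrit d = 0 := by
      unfold kcrit
      have : (∫ k in Set.univ.pi fun _ : Fin d => Set.Ioo (0 : ℝ) 1,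
          (2 * ∑ j : Fin d, (1 - Real.cos (2 * Real.pi * k j)))⁻¹) = 0 := by
        apply integral_undef
        show ¬ Integrable _ (volume.restrict _)
        rw [restrict_Ioo_eq d]
        exact hInt
      rw [this, mul_zero]
    linarith
  case pos =>
    have hlim : Filter.Tendsto (fun n : ℕ => Iv d ((n+1:ℝ)⁻¹)) Filter.atTop
        (nhds (∫ k in Cube d, (En d k)⁻¹)) := by
      apply MeasureTheory.tendsto_integral_of_dominated_convergence
        (bound := fun k => (En d k)⁻¹)
      · exact fun n => ((measurable_const.add (En_cont d).measurable).inv).aestronglyMeasurable.restrict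
      · exact hInt
      · intro n
        filter_upwards [En_pos_ae d hd] with k hk
        have hn : (0:ℝ) < (n+1:ℝ)⁻¹ := by positivity
        rw [Real.norm_eq_abs, abs_of_pos (inv_pos.2 (by linarith))]
        exact inv_anti₀ hk (by linarith)
      · filter_upwards [En_pos_ae d hd] with k hk
        have h1 : Filter.Tendsto (fun n : ℕ => (n+1:ℝ)⁻¹ + En d k) Filter.atTop (nhds (En d k)) := by
          have := tendsto_one_div_add_atTop_nhds_zero_nat (𝕜 := ℝ)
          simp only [one_div] at this
          simpa using this.add_const (En d k)
        exact (h1.inv₀ hk.ne').congr (fun n => rfl) |>.congr' (by rfl)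
    have hkc : (∫ k in Cube d, (En d k)⁻¹) = 4 * kcrit d := by
      unfold kcrit
      rw [show (∫ k in Set.univ.pi fun _ : Fin d => Set.Ioo (0 : ℝ) 1,
          (2 * ∑ j : Fin d, (1 - Real.cos (2 * Real.pi * k j)))⁻¹)
          = ∫ k in Cube d, (En d k)⁻¹ by
        show (∫ k, _ ∂(volume.restrict _)) = _
        rw [restrict_Ioo_eq d]; rfl]
      ring
    rw [hkc] at hlim
    have hev : ∀ᶠ n : ℕ in Filter.atTop, 4 * κ < Iv d ((n+1:ℝ)⁻¹) :=
      hlim.eventually_const_lt (by linarith)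
    obtain ⟨n, hn⟩ := hev.exists
    exact ⟨(n+1:ℝ)⁻¹, by positivity, hn⟩

/-- If `d ∈ {1,2}` and `κ > 0`, or `d ≥ 3` and `0 < κ < κ_c`, the infinite-volume edge
self-consistency equation
`(1/(4κ)) ∫_{[0,1)^d} cos(2π k_1)/(m + 2Σ_j(1 − cos 2π k_j)) dk = m/(2d) + 1 − 1/(8κd)`
has a positive solution `m > 0`. -/
theorem stmt11 (d : ℕ) (hd : 1 ≤ d) (κ : ℝ)
    (h : ((d = 1 ∨ d = 2) ∧ 0 < κ) ∨ (3 ≤ d ∧ 0 < κ ∧ κ < kcrit d)) :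
    ∃ m : ℝ, 0 < m ∧
      (1 / (4 * κ)) * ∫ k in Set.univ.pi fun _ : Fin d => Set.Ico (0 : ℝ) 1,
          Real.cos (2 * Real.pi * k ⟨0, hd⟩) /
            (m + 2 * ∑ j : Fin d, (1 - Real.cos (2 * Real.pi * k j)))
        = m / (2 * d) + 1 - 1 / (8 * κ * d) := by
  have hκ0 : 0 < κ := by rcases h with ⟨_, hκ⟩ | ⟨_, hκ, _⟩ <;> exact hκ
  have hbig : ∃ m₀ : ℝ, 0 < m₀ ∧ 4 * κ < Iv d m₀ := by
    rcases h with ⟨hd12, hκ⟩ | ⟨hd3, hκ, hκc⟩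
    · rcases hd12 with h1 | h2
      · subst h1
        set b : ℝ := (260*κ+2)⁻¹ with hb_def
        have hb : 0 < b := by positivity
        have hb1 : b ≤ 1 := by
          rw [hb_def]
          exact inv_le_one_of_one_le₀ (by linarith)
        refine ⟨b^2, by positivity, ?_⟩
        have hsq : Real.sqrt (b^2) = b := Real.sqrt_sq hb.le
        have hlb := Iv_lb_one (m := b^2) (by positivity) (by nlinarith)
        rw [hsq] at hlb
        have hbinv : b⁻¹ = 260*κ+2 := by rw [hb_def, inv_inv]
        rw [hbinv] at hlb
        have : (1/65 : ℝ) * (260*κ+2-1) = 4*κ + 1/65 := by ring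
        linarith
      · subst h2
        set c : ℝ := Real.exp (-(516*κ+1)) with hc_def
        have hc : 0 < c := Real.exp_pos _
        have hc1 : c ≤ 1 := Real.exp_le_one_iff.2 (by linarith)
        refine ⟨c^2, by positivity, ?_⟩
        have hsq : Real.sqrt (c^2) = c := Real.sqrt_sq hc.le
        have hlb := Iv_lb_two (m := c^2) (by positivity) (by nlinarith)
        rw [hsq] at hlb
        have hlog : -Real.log c = 516*κ+1 := by rw [hc_def, Real.log_exp]; ring
        rw [hlog] at hlb
        have : (1/129 : ℝ) * (516*κ+1) = 4*κ + 1/129 := by ring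
        linarith
    · exact exists_big_of_three d hd κ hκ hκc
  obtain ⟨m₀, hm₀, hIv₀⟩ := hbig
  set m₁ : ℝ := (2*κ)⁻¹ with hm₁_def
  have hm₁ : 0 < m₁ := by positivity
  have hIv₁ : Iv d m₁ < 4 * κ := lt_of_le_of_lt (Iv_le d hm₁) (by rw [hm₁_def, inv_inv]; linarith)
  have hsub : Set.uIcc m₀ m₁ ⊆ Set.Ioi 0 := by
    intro x hx
    rcases Set.mem_uIcc.1 hx with ⟨h1, _⟩ | ⟨h1, _⟩
    · exact lt_of_lt_of_le hm₀ h1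
    · exact lt_of_lt_of_le hm₁ h1
  have hconts : ContinuousOn (Iv d) (Set.uIcc m₀ m₁) :=
    fun x hx => (Iv_continuousAt d (hsub hx)).continuousWithinAt
  have hmem : 4*κ ∈ Set.uIcc (Iv d m₀) (Iv d m₁) :=
    Set.mem_uIcc.2 (Or.inr ⟨hIv₁.le, hIv₀.le⟩)
  obtain ⟨m, hmmem, hmeq⟩ := intermediate_value_uIcc hconts hmem
  have hmpos : 0 < m := hsub hmmem
  refine ⟨m, hmpos, ?_⟩
  have hid := key_identity d hd hmpos
  show (1/(4*κ)) * ∫ k in Cube d, Real.cos (2*Real.pi * k ⟨0,hd⟩) / (m + En d k)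
      = m / (2 * d) + 1 - 1 / (8 * κ * d)
  rw [hid, hmeq]
  have hd0 : (0:ℝ) < (d:ℝ) := by exact_mod_cast hd
  field_simp
  ring
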